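/- For all natural numbers n and k with k ≤ n, the following two formulas for the dimensions of the cell modules of the rook partition algebra agree: ∑_{i=0}^{n−k} C(n,i) · ∑_{j=k}^{n−i} C(j,k) · S(n−i, j) = ∑_{j=k}^{n} C(n,j) · S(j,k) · B(n−j+1), where C denotes the binomial coefficient. -/

import Mathlib

/-- The `n`-th Bell number: the number of set partitions of an `n`-element set. -/
noncomputable def bell (n : ℕ) : ℕ := Nat.card (Finpartition (Finset.univ : Finset (Fin n)))

/-- The Stirling number of the second kind `S(n,k)`. -/
noncomputable def stirling (n k : ℕ) : ℕ :=
  Nat.card {P : Finpartition (Finset.univ : Finset (Fin n)) // P.parts.card = k}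


open Finset

variable {α β : Type*} [DecidableEq α] [DecidableEq β]

namespace RookAux

/-- Map a finset-of-finsets sup along an embedding. -/
lemma sup_map_map (f : α ↪ β) (M : Finset (Finset α)) :
    (M.map ⟨Finset.map f, Finset.map_injective f⟩).sup id = (M.sup id).map f := by
  ext y
  simp only [Finset.mem_sup, Finset.mem_map, id_eq]
  constructor
  · rintro ⟨p, ⟨q, hq, rfl⟩, hy⟩
    obtain ⟨x, hx, rfl⟩ := Finset.mem_map.1 hy
    exact ⟨x, ⟨q, hq, hx⟩, rfl⟩
  · rintro ⟨x, ⟨q, hq, hx⟩, rfl⟩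
    exact ⟨q.map f, ⟨q, hq, rfl⟩, Finset.mem_map_of_mem f hx⟩

/-- Push a finpartition forward along an embedding. -/
def pfwd (f : α ↪ β) {s : Finset α} (P : Finpartition s) : Finpartition (s.map f) where
  parts := P.parts.map ⟨Finset.map f, Finset.map_injective f⟩
  supIndep := by
    rw [Finset.supIndep_iff_pairwiseDisjoint]
    rintro p hp q hq hpq
    simp only [Finset.coe_map, Set.mem_image, Finset.mem_coe, Function.Embedding.coeFn_mk] at hp hq
    obtain ⟨p', hp', rfl⟩ := hp
    obtain ⟨q', hq', rfl⟩ := hq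
    have : p' ≠ q' := fun h => hpq (by rw [h])
    have := P.disjoint hp' hq' this
    simpa only [Function.onFun, id_eq, Finset.disjoint_map] using this
  sup_parts := by rw [sup_map_map, P.sup_parts]
  bot_notMem := by
    simp only [Finset.bot_eq_empty, Finset.mem_map, Function.Embedding.coeFn_mk]
    rintro ⟨p, hp, hpe⟩
    rw [Finset.map_eq_empty] at hpe
    subst hpe
    exact P.bot_notMem (by simpa using hp)

@[simp] lemma pfwd_parts (f : α ↪ β) {s : Finset α} (P : Finpartition s) :
    (pfwd f P).parts = P.parts.map ⟨Finset.map f, Finset.map_injective f⟩ := rfl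

/-- Pull a finpartition back along an embedding. -/
noncomputable def pbwd (f : α ↪ β) {s : Finset α} (P : Finpartition (s.map f)) : Finpartition s where
  parts := P.parts.image fun p => p.preimage f f.injective.injOn
  supIndep := by
    rw [Finset.supIndep_iff_pairwiseDisjoint]
    rintro p hp q hq hpq
    simp only [Finset.coe_image, Set.mem_image, Finset.mem_coe] at hp hq
    obtain ⟨p', hp', rfl⟩ := hp
    obtain ⟨q', hq', rfl⟩ := hq
    have hne : p' ≠ q' := fun h => hpq (by rw [h])
    have hd := P.disjoint hp' hq' hne
    simp only [Function.onFun, id_eq] at hd ⊢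
    rw [Finset.disjoint_left] at hd ⊢
    intro a ha ha'
    rw [Finset.mem_preimage] at ha ha'
    exact hd ha ha'
  sup_parts := by
    ext x
    simp only [Finset.mem_sup, Finset.mem_image, id_eq]
    constructor
    · rintro ⟨p, ⟨q, hq, rfl⟩, hx⟩
      rw [Finset.mem_preimage] at hx
      have := P.le hq hx
      simpa only [Finset.mem_map'] using this
    · intro hx
      have hfx : f x ∈ s.map f := Finset.mem_map_of_mem f hx
      rw [← P.sup_parts, Finset.mem_sup] at hfx
      obtain ⟨p, hp, hfp⟩ := hfx
      exact ⟨p.preimage f f.injective.injOn, ⟨p, hp, rfl⟩, Finset.mem_preimage.2 hfp⟩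
  bot_notMem := by
    simp only [Finset.bot_eq_empty, Finset.mem_image]
    rintro ⟨p, hp, hpe⟩
    obtain ⟨y, hy⟩ := P.nonempty_of_mem_parts hp
    have := P.le hp hy
    obtain ⟨x, _, rfl⟩ := Finset.mem_map.1 this
    have : x ∈ p.preimage f f.injective.injOn := Finset.mem_preimage.2 hy
    rw [hpe] at this
    exact absurd this (Finset.notMem_empty x)

/-- Transport a finpartition along an embedding, as an equivalence. -/
noncomputable def pequiv (f : α ↪ β) (s : Finset α) : Finpartition s ≃ Finpartition (s.map f) where
  toFun := pfwd f
  invFun := pbwd f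
  left_inv P := by
    apply Finpartition.ext
    ext p
    simp only [pbwd, pfwd, Finset.mem_image, Finset.mem_map, Function.Embedding.coeFn_mk]
    constructor
    · rintro ⟨q, ⟨r, hr, rfl⟩, rfl⟩
      rwa [show (r.map f).preimage f f.injective.injOn = r by
        ext x; simp [Finset.mem_preimage]]
    · intro hp
      exact ⟨p.map f, ⟨p, hp, rfl⟩, by ext x; simp [Finset.mem_preimage]⟩
  right_inv P := by
    apply Finpartition.ext
    ext p
    simp only [pbwd, pfwd, Finset.mem_map, Finset.mem_image, Function.Embedding.coeFn_mk]
    constructor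
    · rintro ⟨q, ⟨r, hr, rfl⟩, rfl⟩
      have hsub : r ⊆ s.map f := P.le hr
      rwa [show (r.preimage f f.injective.injOn).map f = r by
        ext y
        simp only [Finset.mem_map, Finset.mem_preimage]
        constructor
        · rintro ⟨x, hx, rfl⟩; exact hx
        · intro hy
          obtain ⟨x, _, rfl⟩ := Finset.mem_map.1 (hsub hy)
          exact ⟨x, hy, rfl⟩]
    · intro hp
      have hsub : p ⊆ s.map f := P.le hp
      refine ⟨p.preimage f f.injective.injOn, ⟨p, hp, rfl⟩, ?_⟩
      ext y
      simp only [Finset.mem_map, Finset.mem_preimage]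
      constructor
      · rintro ⟨x, hx, rfl⟩; exact hx
      · intro hy
        obtain ⟨x, _, rfl⟩ := Finset.mem_map.1 (hsub hy)
        exact ⟨x, hy, rfl⟩

@[simp] lemma pequiv_apply_parts_card (f : α ↪ β) {s : Finset α} (P : Finpartition s) :
    ((pequiv f s) P).parts.card = P.parts.card := Finset.card_map _

end RookAux

namespace RookAux

lemma univ_map_orderEmbOfFin {N m : ℕ} (s : Finset (Fin N)) (h : s.card = m) :
    (Finset.univ : Finset (Fin m)).map (s.orderEmbOfFin h).toEmbedding = s := by
  ext x
  simp only [Finset.mem_map, Finset.mem_univ, true_and, RelEmbedding.coe_toEmbedding]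
  constructor
  · rintro ⟨i, rfl⟩; exact Finset.orderEmbOfFin_mem s h i
  · intro hx
    have : x ∈ Set.range (s.orderEmbOfFin h) := by
      rw [Finset.range_orderEmbOfFin]; exact hx
    exact this

lemma card_finpartition_eq_bell {N : ℕ} (s : Finset (Fin N)) :
    Nat.card (Finpartition s) = bell s.card := by
  have h := univ_map_orderEmbOfFin s rfl
  rw [bell]
  conv_lhs => rw [← h]
  exact (Nat.card_congr (pequiv (s.orderEmbOfFin rfl).toEmbedding Finset.univ)).symm

lemma card_stirling_eq {N k : ℕ} (s : Finset (Fin N)) :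
    Nat.card {P : Finpartition s // P.parts.card = k} = stirling s.card k := by
  have h := univ_map_orderEmbOfFin s rfl
  rw [stirling]
  have e := (pequiv (s.orderEmbOfFin rfl).toEmbedding Finset.univ)
  have e2 : {P : Finpartition (Finset.univ : Finset (Fin s.card)) // P.parts.card = k}
      ≃ {P : Finpartition ((Finset.univ : Finset (Fin s.card)).map
          (s.orderEmbOfFin rfl).toEmbedding) // P.parts.card = k} :=
    (pequiv _ _).subtypeEquiv fun P => by
      rw [pequiv_apply_parts_card]
  rw [Nat.card_congr e2, h]

end RookAux

namespace RookAux

variable {γ : Type*} [DecidableEq γ]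

/-- Combine finpartitions of two disjoint finsets. -/
def combine {u v : Finset γ} (huv : Disjoint u v) (Q : Finpartition u) (R : Finpartition v) :
    Finpartition (u ∪ v) where
  parts := Q.parts ∪ R.parts
  supIndep := by
    rw [Finset.supIndep_iff_pairwiseDisjoint]
    rintro p hp q hq hpq
    simp only [Finset.coe_union, Set.mem_union, Finset.mem_coe] at hp hq
    have key : ∀ a b : Finset γ, a ∈ Q.parts → b ∈ R.parts → Disjoint (id a) (id b) := by
      intro a b ha hb
      exact Finset.disjoint_of_subset_left (Q.le ha) (Finset.disjoint_of_subset_right (R.le hb) huv)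
    rcases hp with hp | hp <;> rcases hq with hq | hq
    · exact Q.disjoint hp hq hpq
    · exact key _ _ hp hq
    · exact (key _ _ hq hp).symm
    · exact R.disjoint hp hq hpq
  sup_parts := by rw [Finset.sup_union, Q.sup_parts, R.sup_parts]; rfl
  bot_notMem := by
    rw [Finset.mem_union]
    rintro (h | h)
    · exact Q.bot_notMem h
    · exact R.bot_notMem h

@[simp] lemma combine_parts {u v : Finset γ} (huv : Disjoint u v) (Q : Finpartition u)
    (R : Finpartition v) : (combine huv Q R).parts = Q.parts ∪ R.parts := rfl

/-- The parts outside a marked subfamily `M` form a partition of the complement of the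
support of `M`. -/
lemma sup_sdiff_parts {s : Finset γ} (P : Finpartition s) {M : Finset (Finset γ)}
    (hM : M ⊆ P.parts) : (P.parts \ M).sup id = s \ M.sup id := by
  ext x
  simp only [Finset.mem_sup, Finset.mem_sdiff, id_eq]
  constructor
  · rintro ⟨p, ⟨hp, hpM⟩, hx⟩
    refine ⟨P.le hp hx, fun hxM => ?_⟩
    obtain ⟨q, hq, hxq⟩ := hxM
    exact hpM (P.eq_of_mem_parts hp (hM hq) hx hxq ▸ hq)
  · rintro ⟨hxs, hxM⟩
    obtain ⟨p, hp, hxp⟩ := P.exists_mem hxs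
    refine ⟨p, ⟨hp, fun hpM => hxM ?_⟩, hxp⟩
    exact ⟨p, hpM, hxp⟩

/-- If `j > n` then there is no partition of an `n`-set into `j` parts. -/
lemma stirling_eq_zero {n k : ℕ} (h : n < k) : stirling n k = 0 := by
  rw [stirling, Nat.card_eq_zero]
  left
  constructor
  rintro ⟨P, hP⟩
  have := P.card_parts_le_card
  simp only [Finset.card_univ, Fintype.card_fin] at this
  omega

/-- Group a sum over the powerset by cardinality. -/
lemma sum_powerset_card {γ : Type*} [DecidableEq γ] (s : Finset γ) (F : ℕ → ℕ) :
    ∑ T ∈ s.powerset, F T.card = ∑ t ∈ Finset.range (s.card + 1), s.card.choose t * F t := by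
  rw [← Finset.sum_fiberwise_of_maps_to (g := Finset.card) (t := Finset.range (s.card + 1))
    (fun T hT => Finset.mem_range.2 (Nat.lt_succ_of_le
      (Finset.card_le_card (Finset.mem_powerset.1 hT)))) (fun T => F T.card)]
  refine Finset.sum_congr rfl fun t _ => ?_
  have hc : ∑ T ∈ s.powerset.filter (fun T => T.card = t), F T.card
      = ∑ _T ∈ s.powerset.filter (fun T => T.card = t), F t :=
    Finset.sum_congr rfl fun T hT => by rw [(Finset.mem_filter.1 hT).2]
  rw [hc, Finset.sum_const, smul_eq_mul]
  congr 1
  rw [← Finset.card_powersetCard, Finset.powersetCard_eq_filter]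

end RookAux

namespace RookAux

lemma key2 {N : ℕ} {s : Finset (Fin N)} {m r : Finset (Finset (Fin N))}
    (hdisj : Disjoint m r) (hsi : (m ∪ r).SupIndep id) (hsup : (m ∪ r).sup id = s) :
    r.sup id = s \ m.sup id := by
  have hpd := Finset.supIndep_iff_pairwiseDisjoint.1 hsi
  ext x
  simp only [Finset.mem_sup, Finset.mem_sdiff, id_eq]
  constructor
  · rintro ⟨p, hp, hxp⟩
    constructor
    · rw [← hsup]
      exact Finset.mem_sup.2 ⟨p, Finset.mem_union_right _ hp, hxp⟩
    · rintro ⟨q, hq, hxq⟩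
      have hne : q ≠ p := by
        rintro rfl
        exact (Finset.disjoint_left.1 hdisj) hq hp
      have hd := hpd (Finset.mem_coe.2 (Finset.mem_union_left _ hq))
        (Finset.mem_coe.2 (Finset.mem_union_right _ hp)) hne
      exact (Finset.disjoint_left.1 hd) hxq hxp
  · rintro ⟨hxs, hxn⟩
    rw [← hsup] at hxs
    obtain ⟨p, hp, hxp⟩ := Finset.mem_sup.1 hxs
    rcases Finset.mem_union.1 hp with hp1 | hp2
    · exact absurd ⟨p, hp1, hxp⟩ hxn
    · exact ⟨p, hp2, hxp⟩

lemma fiber_count {N : ℕ} (k : ℕ) (s T : Finset (Fin N)) (hTs : T ⊆ s) :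
    Nat.card {z : Finset (Finset (Fin N)) × Finset (Finset (Fin N)) //
        (z.1.card = k ∧ Disjoint z.1 z.2 ∧ (z.1 ∪ z.2).SupIndep id ∧
          (z.1 ∪ z.2).sup id = s ∧ (⊥ : Finset (Fin N)) ∉ z.1 ∪ z.2) ∧ z.1.sup id = T}
      = stirling T.card k * bell (s.card - T.card) := by
  classical
  have hcard : (s \ T).card = s.card - T.card := Finset.card_sdiff_of_subset hTs
  rw [← hcard, ← card_stirling_eq (k := k) T, ← card_finpartition_eq_bell (s \ T),
    ← Nat.card_prod]
  refine Nat.card_congr (Equiv.ofBijective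
    (fun z => (⟨⟨z.1.1, z.2.1.2.2.1.subset Finset.subset_union_left, z.2.2,
        fun hb => z.2.1.2.2.2.2 (Finset.mem_union_left _ hb)⟩, z.2.1.1⟩,
      ⟨z.1.2, z.2.1.2.2.1.subset Finset.subset_union_right,
        (key2 z.2.1.2.1 z.2.1.2.2.1 z.2.1.2.2.2.1).trans
          (congrArg (fun u => s \ u) z.2.2),
      fun hb => z.2.1.2.2.2.2 (Finset.mem_union_right _ hb)⟩))
    ⟨?_, ?_⟩)
  · intro z z' heq
    have hm : z.1.1 = z'.1.1 :=
      congrArg (fun w => (Finpartition.parts (Subtype.val w))) (congrArg Prod.fst heq)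
    have hr : z.1.2 = z'.1.2 :=
      congrArg Finpartition.parts (congrArg Prod.snd heq)
    exact Subtype.ext (Prod.ext hm hr)
  · rintro ⟨⟨Q, hQ⟩, R⟩
    have hdisjQR : Disjoint Q.parts R.parts := by
      rw [Finset.disjoint_left]
      intro p hpQ hpR
      obtain ⟨x, hx⟩ := Q.nonempty_of_mem_parts hpQ
      have hxT : x ∈ T := Q.le hpQ hx
      have hxS : x ∈ s \ T := R.le hpR hx
      exact (Finset.mem_sdiff.1 hxS).2 hxT
    have hun : T ∪ (s \ T) = s := Finset.union_sdiff_of_subset hTs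
    have hsi := (combine Finset.disjoint_sdiff Q R).supIndep
    have hsup := (combine Finset.disjoint_sdiff Q R).sup_parts
    have hnb := (combine Finset.disjoint_sdiff Q R).bot_notMem
    rw [combine_parts] at hsi hsup hnb
    refine ⟨⟨(Q.parts, R.parts), ⟨⟨hQ, hdisjQR, hsi, by rw [hsup]; exact hun, hnb⟩,
      Q.sup_parts⟩⟩, ?_⟩
    refine Prod.ext ?_ ?_
    · exact Subtype.ext (Finpartition.ext rfl)
    · exact Finpartition.ext rfl

lemma lemmaA {N : ℕ} (k : ℕ) (s : Finset (Fin N)) :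
    ∑ j ∈ Finset.range (s.card + 1), j.choose k * stirling s.card j
      = ∑ t ∈ Finset.range (s.card + 1),
          s.card.choose t * (stirling t k * bell (s.card - t)) := by
  classical
  set cond : Finset (Finset (Fin N)) × Finset (Finset (Fin N)) → Prop := fun z =>
      z.1.card = k ∧ Disjoint z.1 z.2 ∧ (z.1 ∪ z.2).SupIndep id ∧
        (z.1 ∪ z.2).sup id = s ∧ (⊥ : Finset (Fin N)) ∉ z.1 ∪ z.2 with hcond
  set Z : Finset (Finset (Finset (Fin N)) × Finset (Finset (Fin N))) :=
    Finset.univ.filter cond with hZ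
  have mkP : ∀ z, cond z → ∃ P : Finpartition s, P.parts = z.1 ∪ z.2 := by
    rintro z ⟨-, -, hsi, hsup, hbot⟩
    exact ⟨⟨z.1 ∪ z.2, hsi, hsup, hbot⟩, rfl⟩
  set g₁ : Finset (Finset (Fin N)) × Finset (Finset (Fin N)) → Finpartition s := fun z =>
    if h : ∃ P : Finpartition s, P.parts = z.1 ∪ z.2 then h.choose else ⊥ with hg₁
  have hg₁parts : ∀ z, cond z → (g₁ z).parts = z.1 ∪ z.2 := by
    intro z hz
    rw [hg₁]
    simp only [dif_pos (mkP z hz)]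
    exact (mkP z hz).choose_spec
  -- Step 1: count `Z` by the underlying partition.
  have step1 : Z.card = ∑ P ∈ (Finset.univ : Finset (Finpartition s)), P.parts.card.choose k := by
    rw [Finset.card_eq_sum_card_fiberwise (f := g₁) (t := Finset.univ)
      (fun z _ => Finset.mem_univ _)]
    refine Finset.sum_congr rfl fun P _ => ?_
    rw [← Finset.card_powersetCard]
    refine Finset.card_nbij' (i := fun z => z.1) (j := fun M => (M, P.parts \ M)) ?_ ?_ ?_ ?_
    · intro z hz
      rw [Finset.mem_coe, Finset.mem_filter] at hz
      obtain ⟨hzZ, hzP⟩ := hz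
      rw [hZ, Finset.mem_filter] at hzZ
      have hc := hzZ.2
      have hparts : z.1 ∪ z.2 = P.parts := by rw [← hg₁parts z hc, hzP]
      exact Finset.mem_powersetCard.2 ⟨hparts ▸ Finset.subset_union_left, hc.1⟩
    · intro M hM
      rw [Finset.mem_coe, Finset.mem_powersetCard] at hM
      obtain ⟨hMsub, hMcard⟩ := hM
      have hun : M ∪ (P.parts \ M) = P.parts := Finset.union_sdiff_of_subset hMsub
      have hc : cond (M, P.parts \ M) := by
        rw [hcond]
        refine ⟨hMcard, Finset.disjoint_sdiff, ?_, ?_, ?_⟩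
        · rw [hun]; exact P.supIndep
        · rw [hun]; exact P.sup_parts
        · rw [hun]; exact P.bot_notMem
      rw [Finset.mem_coe, Finset.mem_filter]
      refine ⟨by rw [hZ, Finset.mem_filter]; exact ⟨Finset.mem_univ _, hc⟩, ?_⟩
      apply Finpartition.ext
      rw [hg₁parts _ hc]
      exact hun
    · intro z hz
      rw [Finset.mem_coe, Finset.mem_filter] at hz
      obtain ⟨hzZ, hzP⟩ := hz
      rw [hZ, Finset.mem_filter] at hzZ
      have hc := hzZ.2
      have hparts : z.1 ∪ z.2 = P.parts := by rw [← hg₁parts z hc, hzP]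
      have h2 : P.parts \ z.1 = z.2 := by
        ext p
        simp only [Finset.mem_sdiff, ← hparts, Finset.mem_union]
        constructor
        · rintro ⟨hp | hp, hnp⟩
          · exact absurd hp hnp
          · exact hp
        · intro hp
          exact ⟨Or.inr hp, fun hp1 => (Finset.disjoint_left.1 hc.2.1) hp1 hp⟩
      show (z.1, P.parts \ z.1) = z
      rw [h2]
    · intro M hM
      rfl
  -- Step 1b: group partitions by their number of parts.
  have step1b : ∑ P ∈ (Finset.univ : Finset (Finpartition s)), P.parts.card.choose k
      = ∑ j ∈ Finset.range (s.card + 1), j.choose k * stirling s.card j := by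
    rw [← Finset.sum_fiberwise_of_maps_to (g := fun P : Finpartition s => P.parts.card)
      (t := Finset.range (s.card + 1))
      (fun P _ => Finset.mem_range.2 (Nat.lt_succ_of_le P.card_parts_le_card))
      (fun P => P.parts.card.choose k)]
    refine Finset.sum_congr rfl fun j _ => ?_
    have hc : ∀ P ∈ Finset.univ.filter (fun P : Finpartition s => P.parts.card = j),
        P.parts.card.choose k = j.choose k := fun P hP => by
      rw [(Finset.mem_filter.1 hP).2]
    rw [Finset.sum_congr rfl hc, Finset.sum_const, smul_eq_mul, mul_comm]
    congr 1
    rw [← card_stirling_eq (k := j) s, Nat.card_eq_fintype_card, Fintype.card_subtype]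
  -- Step 2: count `Z` by the support of the marked blocks.
  have step2 : Z.card = ∑ T ∈ s.powerset, stirling T.card k * bell (s.card - T.card) := by
    rw [Finset.card_eq_sum_card_fiberwise (f := fun z => z.1.sup id) (t := s.powerset) ?_]
    · refine Finset.sum_congr rfl fun T hT => ?_
      have hTs : T ⊆ s := Finset.mem_powerset.1 hT
      have hff : Z.filter (fun z => z.1.sup id = T)
          = Finset.univ.filter (fun z => cond z ∧ z.1.sup id = T) := by
        rw [hZ, Finset.filter_filter]
      rw [hff, ← Fintype.card_subtype, ← Nat.card_eq_fintype_card, hcond]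
      exact fiber_count k s T hTs
    · intro z hz
      rw [hZ, Finset.mem_coe, Finset.mem_filter] at hz
      obtain ⟨-, -, -, -, hsup, -⟩ := hz
      have hsub : z.1.sup id ≤ (z.1 ∪ z.2).sup id := Finset.sup_mono Finset.subset_union_left
      rw [hsup] at hsub
      exact Finset.mem_powerset.2 hsub
  rw [← step1b, ← step1, step2]
  exact sum_powerset_card s fun t => stirling t k * bell (s.card - t)

end RookAux

namespace RookAux

lemma fiberB {N : ℕ} {s B : Finset (Fin N)} {a : Fin N} (ha : a ∈ s) (hB : a ∈ B)
    (hBs : B ⊆ s) :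
    Nat.card {P : Finpartition s // P.part a = B} = bell (s.card - B.card) := by
  classical
  have hcard : (s \ B).card = s.card - B.card := Finset.card_sdiff_of_subset hBs
  rw [← hcard, ← card_finpartition_eq_bell (s \ B)]
  have hsupp : ∀ P : Finpartition s, P.part a = B →
      (P.parts.erase B).sup id = s \ B := by
    intro P hP
    have hBp : B ∈ P.parts := hP ▸ P.part_mem.2 ha
    have h1 : {B} ⊆ P.parts := Finset.singleton_subset_iff.2 hBp
    have := sup_sdiff_parts P h1
    rw [Finset.sup_singleton] at this
    rw [Finset.erase_eq]
    exact this
  refine Nat.card_congr (Equiv.ofBijective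
    (fun P => P.1.ofSubset (Finset.erase_subset _ _) (hsupp P.1 P.2)) ⟨?_, ?_⟩)
  · intro P P' heq
    have h1 : P.1.parts.erase B = P'.1.parts.erase B := congrArg Finpartition.parts heq
    have hBp : B ∈ P.1.parts := by
      have h := P.1.part_mem.2 ha; rwa [P.2] at h
    have hBp' : B ∈ P'.1.parts := by
      have h := P'.1.part_mem.2 ha; rwa [P'.2] at h
    apply Subtype.ext
    apply Finpartition.ext
    rw [← Finset.insert_erase hBp, ← Finset.insert_erase hBp', h1]
  · intro R
    have hBne : B ≠ ⊥ := by
      rw [Finset.bot_eq_empty, ← Finset.nonempty_iff_ne_empty]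
      exact ⟨a, hB⟩
    have hun : B ∪ (s \ B) = s := Finset.union_sdiff_of_subset hBs
    set C : Finpartition s :=
      (combine Finset.disjoint_sdiff (Finpartition.indiscrete hBne) R).copy hun with hC
    have hCparts : C.parts = {B} ∪ R.parts := by
      rw [hC, Finpartition.copy_parts, combine_parts]
      rfl
    have hBC : B ∈ C.parts := by
      rw [hCparts]
      exact Finset.mem_union_left _ (Finset.mem_singleton_self B)
    have hCa : C.part a = B := C.part_eq_of_mem hBC hB
    refine ⟨⟨C, hCa⟩, ?_⟩
    apply Finpartition.ext
    show C.parts.erase B = R.parts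
    have hBR : B ∉ R.parts := by
      intro hmem
      have := R.le hmem hB
      exact (Finset.mem_sdiff.1 this).2 hB
    rw [hCparts]
    ext p
    simp only [Finset.mem_erase, Finset.mem_union, Finset.mem_singleton]
    constructor
    · rintro ⟨hne, hp | hp⟩
      · exact absurd hp hne
      · exact hp
    · intro hp
      exact ⟨fun h => hBR (h ▸ hp), Or.inr hp⟩

lemma bell_succ (m : ℕ) :
    bell (m + 1) = ∑ t ∈ Finset.range (m + 1), m.choose t * bell (m - t) := by
  classical
  set a : Fin (m + 1) := Fin.last m with haa
  have hEcard : ((Finset.univ : Finset (Fin (m + 1))).erase a).card = m := by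
    rw [Finset.card_erase_of_mem (Finset.mem_univ a), Finset.card_univ, Fintype.card_fin]
    omega
  rw [bell, Nat.card_eq_fintype_card, ← Finset.card_univ]
  rw [Finset.card_eq_sum_card_fiberwise
    (f := fun P : Finpartition (Finset.univ : Finset (Fin (m + 1))) => P.part a)
    (t := (Finset.univ : Finset (Fin (m + 1))).powerset.filter (fun B => a ∈ B))
    (fun P _ => Finset.mem_filter.2 ⟨Finset.mem_powerset.2 (P.le (P.part_mem.2 (Finset.mem_univ a))),
      P.mem_part (Finset.mem_univ a)⟩)]
  have step : ∑ B ∈ (Finset.univ : Finset (Fin (m + 1))).powerset.filter (fun B => a ∈ B),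
        (Finset.univ.filter
          (fun P : Finpartition (Finset.univ : Finset (Fin (m + 1))) => P.part a = B)).card
      = ∑ T ∈ ((Finset.univ : Finset (Fin (m + 1))).erase a).powerset, bell (m - T.card) := by
    refine Finset.sum_nbij' (fun B => B.erase a) (fun T => insert a T) ?_ ?_ ?_ ?_ ?_
    · intro B hBm
      rw [Finset.mem_filter, Finset.mem_powerset] at hBm
      exact Finset.mem_powerset.2 (Finset.erase_subset_erase a hBm.1)
    · intro T hT
      rw [Finset.mem_powerset] at hT
      refine Finset.mem_filter.2 ⟨Finset.mem_powerset.2 (Finset.subset_univ _),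
        Finset.mem_insert_self a T⟩
    · intro B hBm
      rw [Finset.mem_filter] at hBm
      exact Finset.insert_erase hBm.2
    · intro T hT
      rw [Finset.mem_powerset] at hT
      have haT : a ∉ T := fun h => (Finset.mem_erase.1 (hT h)).1 rfl
      exact Finset.erase_insert haT
    · intro B hBm
      rw [Finset.mem_filter] at hBm
      have hacard : 1 ≤ B.card := Finset.card_pos.2 ⟨a, hBm.2⟩
      have hfc : (Finset.univ.filter
          (fun P : Finpartition (Finset.univ : Finset (Fin (m + 1))) => P.part a = B)).card
          = bell ((Finset.univ : Finset (Fin (m+1))).card - B.card) := by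
        rw [← Fintype.card_subtype, ← Nat.card_eq_fintype_card]
        exact fiberB (Finset.mem_univ a) hBm.2 (Finset.mem_powerset.1 hBm.1)
      rw [hfc, Finset.card_erase_of_mem hBm.2, Finset.card_univ, Fintype.card_fin]
      congr 1
      omega
  rw [step, sum_powerset_card _ (fun t => bell (m - t)), hEcard]

end RookAux

namespace RookAux

lemma lemmaA' (k m : ℕ) :
    ∑ j ∈ Finset.range (m + 1), j.choose k * stirling m j
      = ∑ t ∈ Finset.range (m + 1), m.choose t * (stirling t k * bell (m - t)) := by
  have h := lemmaA (N := m) k Finset.univ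
  simpa using h

end RookAux

open RookAux in
/-- The two formulas for the dimensions of the cell modules of the rook partition algebra
agree. -/
theorem stmt12 (n k : ℕ) (hk : k ≤ n) :
    ∑ i ∈ Finset.range (n - k + 1),
        n.choose i * ∑ j ∈ Finset.Icc k (n - i), j.choose k * stirling (n - i) j
      = ∑ j ∈ Finset.Icc k n, n.choose j * stirling j k * bell (n - j + 1) := by
  classical
  -- Convert inner `Icc` sums to `range` sums and apply the first counting identity.
  have hL : ∀ i ∈ Finset.range (n - k + 1),
      n.choose i * ∑ j ∈ Finset.Icc k (n - i), j.choose k * stirling (n - i) j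
        = n.choose i * ∑ t ∈ Finset.range (n - i + 1),
            (n - i).choose t * (stirling t k * bell (n - i - t)) := by
    intro i _
    congr 1
    rw [← lemmaA' k (n - i)]
    apply Finset.sum_subset
    · intro j hj
      rw [Finset.mem_Icc] at hj
      rw [Finset.mem_range]
      omega
    · intro j hj hnot
      rw [Finset.mem_range] at hj
      rw [Finset.mem_Icc] at hnot
      have hjk : j < k := by omega
      rw [Nat.choose_eq_zero_of_lt hjk, zero_mul]
  rw [Finset.sum_congr rfl hL]
  -- Convert the right side to a `range` sum.
  have hR1 : ∑ j ∈ Finset.Icc k n, n.choose j * stirling j k * bell (n - j + 1)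
      = ∑ j ∈ Finset.range (n + 1), n.choose j * stirling j k * bell (n - j + 1) := by
    apply Finset.sum_subset
    · intro j hj
      rw [Finset.mem_Icc] at hj
      rw [Finset.mem_range]
      omega
    · intro j hj hnot
      rw [Finset.mem_range] at hj
      rw [Finset.mem_Icc] at hnot
      have hjk : j < k := by omega
      rw [stirling_eq_zero hjk, mul_zero, zero_mul]
  rw [hR1]
  -- Apply the Bell recurrence on the right.
  have hR2 : ∀ j ∈ Finset.range (n + 1),
      n.choose j * stirling j k * bell (n - j + 1)
        = n.choose j * stirling j k *
            ∑ i ∈ Finset.range (n - j + 1), (n - j).choose i * bell (n - j - i) := by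
    intro j _
    rw [bell_succ (n - j)]
  rw [Finset.sum_congr rfl hR2]
  -- Extend the outer sum on the left to `range (n + 1)`.
  have hext : ∑ i ∈ Finset.range (n - k + 1),
      n.choose i * ∑ t ∈ Finset.range (n - i + 1),
          (n - i).choose t * (stirling t k * bell (n - i - t))
      = ∑ i ∈ Finset.range (n + 1),
      n.choose i * ∑ t ∈ Finset.range (n - i + 1),
          (n - i).choose t * (stirling t k * bell (n - i - t)) := by
    apply Finset.sum_subset
    · intro i hi
      rw [Finset.mem_range] at hi ⊢
      omega
    · intro i hi hnot
      rw [Finset.mem_range] at hi hnot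
      have hzero : ∀ t ∈ Finset.range (n - i + 1),
          (n - i).choose t * (stirling t k * bell (n - i - t)) = 0 := by
        intro t ht
        rw [Finset.mem_range] at ht
        rw [stirling_eq_zero (show t < k by omega), zero_mul, mul_zero]
      rw [Finset.sum_eq_zero hzero, mul_zero]
  rw [hext]
  -- The common symmetric form of the summand.
  set F : ℕ → ℕ → ℕ := fun i t =>
    n.choose (i + t) * (i + t).choose t * (stirling t k * bell (n - (i + t))) with hF
  have key1 : ∀ i t, i + t ≤ n →
      n.choose i * (n - i).choose t = n.choose (i + t) * (i + t).choose t := by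
    intro i t h1
    have e1 := Nat.choose_mul (n := n) (k := i + t) (s := i) (Nat.le_add_right i t)
    rw [Nat.add_sub_cancel_left] at e1
    have e2 : (i + t).choose t = (i + t).choose i := by
      have h3 := Nat.choose_symm (n := i + t) (k := i) (Nat.le_add_right i t)
      rwa [Nat.add_sub_cancel_left] at h3
    rw [e2]
    exact e1.symm
  have key2 : ∀ i t, i + t ≤ n →
      n.choose t * (n - t).choose i = n.choose (i + t) * (i + t).choose t := by
    intro i t h1
    have e1 := Nat.choose_mul (n := n) (k := t + i) (s := t) (Nat.le_add_right t i)
    rw [Nat.add_sub_cancel_left, Nat.add_comm t i] at e1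
    exact e1.symm
  calc
    ∑ i ∈ Finset.range (n + 1), n.choose i * ∑ t ∈ Finset.range (n - i + 1),
        (n - i).choose t * (stirling t k * bell (n - i - t))
      = ∑ i ∈ Finset.range (n + 1), ∑ t ∈ Finset.range (n - i + 1), F i t := by
        refine Finset.sum_congr rfl fun i hi => ?_
        rw [Finset.mul_sum]
        refine Finset.sum_congr rfl fun t ht => ?_
        rw [Finset.mem_range] at hi ht
        have h1 : i + t ≤ n := by omega
        rw [hF]
        rw [Nat.sub_sub, ← mul_assoc, key1 i t h1]
    _ = ∑ t ∈ Finset.range (n + 1), ∑ i ∈ Finset.range (n - t + 1), F i t := by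
        refine Finset.sum_comm' fun i t => ?_
        simp only [Finset.mem_range]
        omega
    _ = ∑ t ∈ Finset.range (n + 1), n.choose t * stirling t k *
          ∑ i ∈ Finset.range (n - t + 1), (n - t).choose i * bell (n - t - i) := by
        refine Finset.sum_congr rfl fun t ht => ?_
        rw [Finset.mul_sum]
        refine Finset.sum_congr rfl fun i hi => ?_
        rw [Finset.mem_range] at hi ht
        have h1 : i + t ≤ n := by omega
        rw [hF]
        rw [show n - t - i = n - (i + t) by omega, mul_mul_mul_comm, key2 i t h1]
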